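/- Centered KL–variance bound: with τ = Σ_{i>k} p_i, KL(P̂‖P) = −log(1−τ), μ_P = Σ_{i=1}^{n} p_i v_i, and Var_P(V) = Σ_{i=1}^{n} p_i ‖v_i − μ_P‖₂², the output error satisfies ‖ Σ_i p_i v_i − Σ_i p̂_i v_i ‖₂ ≤ √( e^{KL(P̂‖P)} − 1 ) · √(Var_P(V)). -/

import Mathlib

/-!
The Top-`k` distribution is `P` conditioned on the head `A = {i < k}`. Since `P` and `P̂` have
the same total mass, the error `∑ (p i - p̂ i) • v i` may be centred at any point, e.g. `μ_P`,
and weighted Cauchy–Schwarz bounds its norm by `√χ²(P̂‖P) · √Var_P(V)`. For a conditioned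
distribution `χ²(P̂‖P) = 1 / P(A) - 1 = 1 / (1 - τ) - 1 = e^{KL(P̂‖P)} - 1`.
-/

open Finset Real

noncomputable def chiSqDiv {ι : Type*} [Fintype ι] (q p : ι → ℝ) : ℝ :=
  ∑ i, (q i - p i) ^ 2 / p i

section Truncate

variable {ι : Type*} [DecidableEq ι]

noncomputable def truncate (p : ι → ℝ) (A : Finset ι) (i : ι) : ℝ :=
  if i ∈ A then p i / ∑ j ∈ A, p j else 0

theorem truncate_div_const (w : ι → ℝ) (A : Finset ι) {c : ℝ} (hc : c ≠ 0) :
    truncate (fun i => w i / c) A = truncate w A := by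
  funext i
  simp only [truncate, ← sum_div, div_div_div_cancel_right₀ hc]

variable [Fintype ι]

theorem sum_truncate {p : ι → ℝ} {A : Finset ι} (hA : ∑ j ∈ A, p j ≠ 0) :
    ∑ i, truncate p A i = 1 := by
  simp only [truncate]
  rw [← sum_filter, filter_mem_eq_inter, univ_inter, ← sum_div, div_self hA]

theorem chiSqDiv_truncate {p : ι → ℝ} (hp : ∀ i, 0 < p i) (hp1 : ∑ i, p i = 1)
    {A : Finset ι} (hA : ∑ j ∈ A, p j ≠ 0) :
    chiSqDiv (truncate p A) p = (∑ j ∈ A, p j)⁻¹ - 1 := by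
  set m := ∑ j ∈ A, p j
  have h_in : ∀ i ∈ A, (truncate p A i - p i) ^ 2 / p i = p i * (m⁻¹ - 1) ^ 2 := by
    intro i hi
    have := (hp i).ne'
    simp only [truncate, if_pos hi]
    change (p i / m - p i) ^ 2 / p i = _
    field_simp
  have h_out : ∀ i ∉ A, (truncate p A i - p i) ^ 2 / p i = p i := by
    intro i hi
    have := (hp i).ne'
    simp only [truncate, if_neg hi]
    field_simp
    ring
  have h_compl : ∑ i ∈ Aᶜ, p i = 1 - m := by
    rw [← hp1, ← sum_add_sum_compl A p]
    ring
  rw [chiSqDiv, ← sum_add_sum_compl A, sum_congr rfl h_in,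
    sum_congr rfl fun i hi => h_out i (mem_compl.mp hi), ← sum_mul, h_compl]
  field_simp
  ring

end Truncate

theorem sum_mul_le_sqrt_sum_sq_div_mul_sqrt_sum_mul_sq {ι : Type*} (s : Finset ι)
    {w : ι → ℝ} (hw : ∀ i ∈ s, 0 < w i) (a b : ι → ℝ) :
    ∑ i ∈ s, a i * b i ≤ √(∑ i ∈ s, a i ^ 2 / w i) * √(∑ i ∈ s, w i * b i ^ 2) := by
  have hsq : (∑ i ∈ s, a i * b i) ^ 2 ≤ (∑ i ∈ s, a i ^ 2 / w i) * ∑ i ∈ s, w i * b i ^ 2 := by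
    refine sum_sq_le_sum_mul_sum_of_sq_le_mul s
      (fun i hi => div_nonneg (sq_nonneg _) (hw i hi).le)
      (fun i hi => mul_nonneg (hw i hi).le (sq_nonneg _)) fun i hi => le_of_eq ?_
    have := (hw i hi).ne'
    field_simp
  exact (le_sqrt_of_sq_le hsq).trans_eq
    (sqrt_mul (sum_nonneg fun i hi => div_nonneg (sq_nonneg _) (hw i hi).le) _)

section Centering

variable {ι E : Type*} [Fintype ι] [SeminormedAddCommGroup E] [NormedSpace ℝ E]

theorem sum_smul_sub_sum_smul_eq_sum_smul_sub {p q : ι → ℝ} (h : ∑ i, p i = ∑ i, q i)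
    (v : ι → E) (μ : E) :
    ∑ i, p i • v i - ∑ i, q i • v i = ∑ i, (p i - q i) • (v i - μ) := by
  simp only [smul_sub, sum_sub_distrib, ← sum_smul, h, sub_self, sub_zero,
    sub_smul]

theorem norm_sum_smul_sub_sum_smul_le {p q : ι → ℝ} (hp : ∀ i, 0 < p i)
    (h : ∑ i, p i = ∑ i, q i) (v : ι → E) (μ : E) :
    ‖∑ i, p i • v i - ∑ i, q i • v i‖ ≤ √(chiSqDiv q p) * √(∑ i, p i * ‖v i - μ‖ ^ 2) := by
  rw [sum_smul_sub_sum_smul_eq_sum_smul_sub h v μ]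
  calc ‖∑ i, (p i - q i) • (v i - μ)‖
      ≤ ∑ i, |p i - q i| * ‖v i - μ‖ := by
        simpa only [norm_smul, Real.norm_eq_abs] using
          norm_sum_le univ fun i => (p i - q i) • (v i - μ)
    _ ≤ √(∑ i, |p i - q i| ^ 2 / p i) * √(∑ i, p i * ‖v i - μ‖ ^ 2) :=
        sum_mul_le_sqrt_sum_sq_div_mul_sqrt_sum_mul_sq univ (fun i _ => hp i) _ _
    _ = √(chiSqDiv q p) * √(∑ i, p i * ‖v i - μ‖ ^ 2) := by
        simp only [chiSqDiv, sq_abs, ← neg_sub (q _), neg_sq]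

end Centering

theorem kl_variance_bound_general (n k d : ℕ) (hkn : k < n)
    (s : Fin n → ℝ)
    (p phat : Fin n → ℝ)
    (hp : ∀ i, p i = Real.exp (s i) / ∑ j, Real.exp (s j))
    (hphat : ∀ i : Fin n, phat i =
      if (i : ℕ) < k then
        Real.exp (s i) /
          ∑ j ∈ Finset.univ.filter (fun j : Fin n => (j : ℕ) < k), Real.exp (s j)
      else 0)
    (v : Fin n → EuclideanSpace ℝ (Fin d))
    (τ : ℝ) (hτ : τ = ∑ i ∈ Finset.univ.filter (fun i : Fin n => k ≤ (i : ℕ)), p i)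
    (hτ1 : τ < 1)
    (KL : ℝ) (hKL : KL = -Real.log (1 - τ))
    (μP : EuclideanSpace ℝ (Fin d))
    (varP : ℝ) (hvarP : varP = ∑ i, p i * ‖v i - μP‖ ^ 2) :
    ‖(∑ i, p i • v i) - ∑ i, phat i • v i‖
      ≤ Real.sqrt (Real.exp KL - 1) * Real.sqrt varP := by
  set A := univ.filter fun j : Fin n => (j : ℕ) < k
  have hZ : 0 < ∑ j, exp (s j) := sum_pos (fun j _ => exp_pos _) ⟨⟨0, by omega⟩, mem_univ _⟩
  have hp_pos : ∀ i, 0 < p i := fun i => (hp i).symm ▸ div_pos (exp_pos _) hZ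
  have hp_sum : ∑ i, p i = 1 := by simp only [hp, ← sum_div, div_self hZ.ne']
  have hA : ∑ i ∈ A, p i = 1 - τ := by
    rw [hτ, ← hp_sum, ← sum_filter_add_sum_filter_not univ fun j : Fin n => (j : ℕ) < k]
    simp only [not_lt, add_sub_cancel_right]
    rfl
  have hA0 : ∑ i ∈ A, p i ≠ 0 := by rw [hA]; linarith
  have hphat_eq : phat = truncate p A := by
    rw [funext hp, truncate_div_const _ _ hZ.ne']
    funext i
    simp only [hphat, truncate, A, mem_filter, mem_univ, true_and]
  have hKL_eq : exp KL - 1 = chiSqDiv phat p := by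
    rw [hphat_eq, chiSqDiv_truncate hp_pos hp_sum hA0, hA, hKL, exp_neg,
      exp_log (by linarith)]
  have hphat_sum : ∑ i, phat i = 1 := hphat_eq ▸ sum_truncate hA0
  rw [hKL_eq, hvarP]
  exact norm_sum_smul_sub_sum_smul_le hp_pos (hp_sum.trans hphat_sum.symm) v μP

/-- **Centered KL–variance bound.** With tail mass `τ = ∑_{i>k} p i`, `0 < τ < 1`,
`KL(P̂‖P) = −log(1−τ)`, full mean `μ_P = ∑ p i • v i` and variance
`Var_P(V) = ∑ p i ‖v i − μ_P‖²`, the output error satisfies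
`‖∑ p i • v i − ∑ p̂ i • v i‖ ≤ √(e^{KL(P̂‖P)} − 1) · √(Var_P(V))`. -/
theorem kl_variance_bound (n k d : ℕ) (hk : 1 ≤ k) (hkn : k < n)
    (s : Fin n → ℝ) (hs : ∀ i j : Fin n, i ≤ j → s j ≤ s i)
    (p phat : Fin n → ℝ)
    (hp : ∀ i, p i = Real.exp (s i) / ∑ j, Real.exp (s j))
    (hphat : ∀ i : Fin n, phat i =
      if (i : ℕ) < k then
        Real.exp (s i) /
          ∑ j ∈ Finset.univ.filter (fun j : Fin n => (j : ℕ) < k), Real.exp (s j)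
      else 0)
    (v : Fin n → EuclideanSpace ℝ (Fin d))
    (τ : ℝ) (hτ : τ = ∑ i ∈ Finset.univ.filter (fun i : Fin n => k ≤ (i : ℕ)), p i)
    (hτ0 : 0 < τ) (hτ1 : τ < 1)
    (KL : ℝ) (hKL : KL = -Real.log (1 - τ))
    (μP : EuclideanSpace ℝ (Fin d)) (hμP : μP = ∑ i, p i • v i)
    (varP : ℝ) (hvarP : varP = ∑ i, p i * ‖v i - μP‖ ^ 2) :
    ‖(∑ i, p i • v i) - ∑ i, phat i • v i‖
      ≤ Real.sqrt (Real.exp KL - 1) * Real.sqrt varP :=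
  kl_variance_bound_general n k d hkn s p phat hp hphat v τ hτ hτ1 KL hKL μP varP hvarP
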